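/- arXiv:2007.07002 — 2 statements merged into one kernel-verified Lean document; each statement's English description precedes it below -/
import Mathlib

section
/- Let F(n) = Σ_{i∈G} min(g_i + n·γ_i·ĝ_i, ḡ_i) with γ_i·ĝ_i > 0 for all i ∈ G (G finite nonempty), and suppose g_i < ḡ_i for at least one i. If F(n₁) = F(n₂) = D for n₁, n₂ ∈ [0,1] with D < Σ_{i∈G} ḡ_i, then n₁ = n₂. That is, the balancing global signal satisfying the demand constraint is unique when it leaves at least one generator strictly below its limit. -/
open Set

lemma apr_aux {ι : Type*} (G : Finset ι)
    (g γ ghat gbar : ι → ℝ) (hr : ∀ i ∈ G, 0 < γ i * ghat i)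
    (D : ℝ) (hD : D < ∑ i ∈ G, gbar i)
    (a b : ℝ) (hab : a ≤ b)
    (ha : ∑ i ∈ G, min (g i + a * (γ i * ghat i)) (gbar i) = D)
    (hb : ∑ i ∈ G, min (g i + b * (γ i * ghat i)) (gbar i) = D) :
    a = b := by
  rcases eq_or_lt_of_le hab with h | h
  · exact h
  exfalso
  have hle : ∀ i ∈ G, min (g i + a * (γ i * ghat i)) (gbar i)
      ≤ min (g i + b * (γ i * ghat i)) (gbar i) := by
    intro i hi
    exact min_le_min (by nlinarith [hr i hi]) le_rfl
  have heq : ∀ i ∈ G, min (g i + a * (γ i * ghat i)) (gbar i)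
      = min (g i + b * (γ i * ghat i)) (gbar i) := by
    intro i hi
    exact ((Finset.sum_eq_sum_iff_of_le hle).mp (ha.trans hb.symm)) i hi
  have hsat : ∀ i ∈ G, min (g i + a * (γ i * ghat i)) (gbar i) = gbar i := by
    intro i hi
    have h1 : g i + a * (γ i * ghat i) < g i + b * (γ i * ghat i) := by
      nlinarith [hr i hi]
    have := heq i hi
    rcases le_or_gt (gbar i) (g i + a * (γ i * ghat i)) with hc | hc
    · exact min_eq_right hc
    · have : min (g i + a * (γ i * ghat i)) (gbar i)
          < min (g i + b * (γ i * ghat i)) (gbar i) := lt_min (by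
        calc min (g i + a * (γ i * ghat i)) (gbar i)
            ≤ g i + a * (γ i * ghat i) := min_le_left _ _
          _ < _ := h1) (lt_of_le_of_lt (min_le_left _ _) hc |>.trans_le le_rfl)
      linarith [heq i hi]
  have : ∑ i ∈ G, min (g i + a * (γ i * ghat i)) (gbar i) = ∑ i ∈ G, gbar i :=
    Finset.sum_congr rfl hsat
  linarith [ha, hD]

/-- Uniqueness of the balancing global APR signal. With strictly
positive response rates, if the aggregate response equals a demand `D` strictly
below total capacity at two points of `[0,1]`, those points coincide. -/
theorem apr_signal_unique {ι : Type*} (G : Finset ι) (hG : G.Nonempty)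
    (g γ ghat gbar : ι → ℝ) (hr : ∀ i ∈ G, 0 < γ i * ghat i)
    (hbelow : ∃ i ∈ G, g i < gbar i)
    (F : ℝ → ℝ) (hF : ∀ n, F n = ∑ i ∈ G, min (g i + n * (γ i * ghat i)) (gbar i))
    (D : ℝ) (hD : D < ∑ i ∈ G, gbar i)
    (n₁ n₂ : ℝ) (hn₁ : n₁ ∈ Icc (0:ℝ) 1) (hn₂ : n₂ ∈ Icc (0:ℝ) 1)
    (h₁ : F n₁ = D) (h₂ : F n₂ = D) :
    n₁ = n₂ := by
  rw [hF] at h₁ h₂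
  rcases le_total n₁ n₂ with h | h
  · exact apr_aux G g γ ghat gbar hr D hD n₁ n₂ h h₁ h₂
  · exact (apr_aux G g γ ghat gbar hr D hD n₂ n₁ h h₂ h₁).symm
end

section
/- Given values g* ∈ ℝ^G for nominal generation and n* ∈ ℝ for the global signal, the system of APR constraints |g_{s,i} − g_i − n·γ_i·ĝ_i| ≤ ḡ_i(1 − x_i), g_i + n·γ_i·ĝ_i ≥ ḡ_i(1 − x_i), g_{s,i} ≥ ḡ_i(1 − x_i), x_i ∈ {0,1}, with ḡ_i > 0 and g_{s,i} ≤ ḡ_i, determines g_{s,i} uniquely: provided g_i + n*·γ_i·ĝ_i ≥ 0, any feasible (g_{s,i}, x_i) must satisfy g_{s,i} = min(g_i + n*·γ_i·ĝ_i, ḡ_i). -/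
/-- The big-M linearization of the APR constraint determines the
post-contingency generation uniquely: any feasible `(gs, x)` with `x ∈ {0,1}`
must satisfy `gs = min (g + n*·γ·ghat) gbar`. -/
theorem apr_bigM_unique (g γ ghat gbar gs nstar x : ℝ)
    (hgbar : 0 < gbar) (hgs_ub : gs ≤ gbar)
    (hx : x = 0 ∨ x = 1)
    (h1 : |gs - g - nstar * γ * ghat| ≤ gbar * (1 - x))
    (h2 : g + nstar * γ * ghat ≥ gbar * (1 - x))
    (h3 : gs ≥ gbar * (1 - x))
    (hnn : 0 ≤ g + nstar * γ * ghat) :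
    gs = min (g + nstar * γ * ghat) gbar := by
  rcases hx with h | h <;> subst h
  · have h2' : gbar ≤ g + nstar * γ * ghat := by linarith [h2]
    have h3' : gbar ≤ gs := by linarith [h3]
    have : gs = gbar := le_antisymm hgs_ub h3'
    rw [this, min_eq_right h2']
  · have h1' : |gs - g - nstar * γ * ghat| ≤ 0 := by linarith [h1]
    have heq : gs = g + nstar * γ * ghat := by
      have := abs_nonpos_iff.mp h1'
      linarith
    rw [heq, min_eq_left (by linarith)]
end
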